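/- arXiv:1004.5572 — 2 statements merged into one kernel-verified Lean document; each statement's English description precedes it below -/
import Mathlib

section
/- Let 0 < ρ < 1 and r > 0. Define g(N) = ρ · (∑_{i=0}^{N-1} (1-ρ)^i) / (∑_{i=0}^{N-1} r^i) for positive integers N. If r < 1 - ρ then g is strictly increasing in N. -/
theorem stmt_1 (ρ r : ℝ) (hρ0 : 0 < ρ) (hρ1 : ρ < 1) (hr : 0 < r) (hlt : r < 1 - ρ)
    (g : ℕ → ℝ)
    (hg : ∀ N, g N = ρ * (∑ i ∈ Finset.range N, (1 - ρ) ^ i) / (∑ i ∈ Finset.range N, r ^ i)) :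
    ∀ M N : ℕ, 1 ≤ M → M < N → g M < g N := by
  set a := 1 - ρ with ha
  have ha0 : 0 < a := by linarith
  have hra : r < a := hlt
  have Rpos : ∀ N : ℕ, 1 ≤ N → 0 < ∑ i ∈ Finset.range N, r ^ i := by
    intro N hN
    apply Finset.sum_pos (fun i _ => pow_pos hr i)
    exact ⟨0, Finset.mem_range.mpr hN⟩
  have key : ∀ N : ℕ, 1 ≤ N →
      (∑ i ∈ Finset.range N, a ^ i) * r ^ N < a ^ N * ∑ i ∈ Finset.range N, r ^ i := by
    intro N hN
    rw [Finset.sum_mul, Finset.mul_sum]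
    apply Finset.sum_lt_sum_of_nonempty ⟨0, Finset.mem_range.mpr hN⟩
    intro i hi
    have hiN : i < N := Finset.mem_range.mp hi
    have h1 : r ^ (N - i) < a ^ (N - i) :=
      pow_lt_pow_left₀ hra hr.le (by omega)
    calc a ^ i * r ^ N = (a ^ i * r ^ i) * r ^ (N - i) := by
          rw [mul_assoc, ← pow_add]; congr 2; omega
      _ < (a ^ i * r ^ i) * a ^ (N - i) := by
          apply mul_lt_mul_of_pos_left h1
          positivity
      _ = a ^ N * r ^ i := by
          rw [show a ^ i * r ^ i * a ^ (N - i) = (a ^ i * a ^ (N - i)) * r ^ i by ring,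
            ← pow_add]
          congr 2; omega
  have step : ∀ N : ℕ, 1 ≤ N → g N < g (N + 1) := by
    intro N hN
    rw [hg, hg]
    rw [div_lt_div_iff₀ (Rpos N hN) (Rpos (N + 1) (by omega))]
    rw [Finset.sum_range_succ, Finset.sum_range_succ]
    have := key N hN
    have hApos : 0 < ∑ i ∈ Finset.range N, a ^ i :=
      Finset.sum_pos (fun i _ => pow_pos ha0 i) ⟨0, Finset.mem_range.mpr hN⟩
    nlinarith [Rpos N hN]
  intro M N hM hMN
  induction N with
  | zero => omega
  | succ n ih =>
    rcases Nat.lt_or_ge M n with h | h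
    · exact lt_trans (ih h) (step n (by omega))
    · have : M = n := by omega
      subst this
      exact step M hM
end

section
/- Let 0 < ρ < 1 and r > 0. Define g(N) = ρ · (∑_{i=0}^{N-1} (1-ρ)^i) / (∑_{i=0}^{N-1} r^i) for positive integers N. If r > 1 - ρ then g is strictly decreasing in N. -/
theorem stmt_2 (ρ r : ℝ) (hρ0 : 0 < ρ) (hρ1 : ρ < 1) (hr : 0 < r) (hgt : 1 - ρ < r)
    (g : ℕ → ℝ)
    (hg : ∀ N, g N = ρ * (∑ i ∈ Finset.range N, (1 - ρ) ^ i) / (∑ i ∈ Finset.range N, r ^ i)) :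
    ∀ M N : ℕ, 1 ≤ M → M < N → g N < g M := by
  have h1ρ : 0 < 1 - ρ := by linarith
  have hSpos : ∀ N, 1 ≤ N → 0 < ∑ i ∈ Finset.range N, (1 - ρ) ^ i := by
    intro N hN
    exact Finset.sum_pos (fun i _ => pow_pos h1ρ i)
      (Finset.nonempty_range_iff.mpr (by omega))
  have hTpos : ∀ N, 1 ≤ N → 0 < ∑ i ∈ Finset.range N, r ^ i := by
    intro N hN
    exact Finset.sum_pos (fun i _ => pow_pos hr i)
      (Finset.nonempty_range_iff.mpr (by omega))
  have step : ∀ K, 1 ≤ K → g (K + 1) < g K := by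
    intro K hK
    rw [hg, hg, div_lt_div_iff₀ (hTpos _ (by omega)) (hTpos _ hK)]
    have key : (1 - ρ) ^ K * ∑ i ∈ Finset.range K, r ^ i
        < r ^ K * ∑ i ∈ Finset.range K, (1 - ρ) ^ i := by
      rw [Finset.mul_sum, Finset.mul_sum]
      refine Finset.sum_lt_sum_of_nonempty (Finset.nonempty_range_iff.mpr (by omega)) ?_
      intro i hi
      have hiK : i < K := Finset.mem_range.mp hi
      have h1 : (1 - ρ) ^ K = (1 - ρ) ^ i * (1 - ρ) ^ (K - i) := by
        rw [← pow_add]; congr 1; omega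
      have h2 : r ^ K = r ^ i * r ^ (K - i) := by
        rw [← pow_add]; congr 1; omega
      have hpow : (1 - ρ) ^ (K - i) < r ^ (K - i) :=
        pow_lt_pow_left₀ hgt h1ρ.le (by omega)
      calc (1 - ρ) ^ K * r ^ i = ((1 - ρ) ^ i * r ^ i) * (1 - ρ) ^ (K - i) := by
              rw [h1]; ring
        _ < ((1 - ρ) ^ i * r ^ i) * r ^ (K - i) :=
              mul_lt_mul_of_pos_left hpow (mul_pos (pow_pos h1ρ i) (pow_pos hr i))
        _ = r ^ K * (1 - ρ) ^ i := by rw [h2]; ring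
    rw [Finset.sum_range_succ, Finset.sum_range_succ]
    nlinarith [mul_lt_mul_of_pos_left key hρ0]
  intro M N hM hMN
  induction N, hMN using Nat.le_induction with
  | base => exact step M hM
  | succ n hn ih => exact (step n (by omega)).trans ih
end
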